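/- arXiv:1112.4047 — 4 statements merged into one kernel-verified Lean document; each statement's English description precedes it below -/
import Mathlib

section
/- For every Schwartz function ψ : ℝ → ℂ and every p ∈ ℝ, the position marginal of the Wigner distribution recovers the momentum probability density: ∫_ℝ W_ψ(x,p) dx = |Ψ(p)|², where Ψ(p) = (1/√(2πħ)) ∫_ℝ ψ(x) exp(−i p x/ħ) dx. -/
open MeasureTheory

/-- The Wigner distribution of a wavefunction `ψ : ℝ → ℂ`, with Planck constant `hbar`:
`W_ψ(x,p) = (1/(2π hbar)) ∫ conj(ψ(x + x'/2)) ψ(x - x'/2) exp(i p x'/hbar) dx'`. -/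
noncomputable def wigner (hbar : ℝ) (ψ : ℝ → ℂ) (x p : ℝ) : ℂ :=
  ((1 / (2 * Real.pi * hbar) : ℝ) : ℂ) *
    ∫ x' : ℝ, (starRingEnd ℂ) (ψ (x + x' / 2)) * ψ (x - x' / 2) *
      Complex.exp (Complex.I * (p : ℂ) * (x' : ℂ) / (hbar : ℂ))

/-- The momentum representation (hbar-scaled Fourier transform) of `ψ`:
`Ψ(p) = (1/√(2π hbar)) ∫ ψ(x) exp(-i p x/hbar) dx`. -/
noncomputable def momRep (hbar : ℝ) (ψ : ℝ → ℂ) (p : ℝ) : ℂ :=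
  ((1 / Real.sqrt (2 * Real.pi * hbar) : ℝ) : ℂ) *
    ∫ x : ℝ, ψ x * Complex.exp (-(Complex.I * (p : ℂ) * (x : ℂ) / (hbar : ℂ)))

/-- The position marginal of the Wigner distribution recovers the momentum
probability density: `∫ W_ψ(x,p) dx = |Ψ(p)|²`. -/
theorem wigner_marginal_position (hbar : ℝ) (hhbar : 0 < hbar) (ψ : SchwartzMap ℝ ℂ)
    (p : ℝ) :
    (∫ x : ℝ, wigner hbar (⇑ψ) x p) = ((‖momRep hbar (⇑ψ) p‖ ^ 2 : ℝ) : ℂ) := by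
  have hb : (hbar : ℂ) ≠ 0 := by exact_mod_cast hhbar.ne'
  set φ₁ : ℝ → ℂ := fun u => (starRingEnd ℂ) (ψ u) *
    Complex.exp (Complex.I * (p : ℂ) * (u : ℂ) / (hbar : ℂ)) with hφ₁def
  set φ₂ : ℝ → ℂ := fun y => ψ y *
    Complex.exp (-(Complex.I * (p : ℂ) * (y : ℂ) / (hbar : ℂ))) with hφ₂def
  -- exp norms
  have hexp1 : ∀ u : ℝ, ‖Complex.exp (Complex.I * (p : ℂ) * (u : ℂ) / (hbar : ℂ))‖ = 1 := by
    intro u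
    have : Complex.I * (p : ℂ) * (u : ℂ) / (hbar : ℂ) = ((p * u / hbar : ℝ) : ℂ) * Complex.I := by
      push_cast; ring
    rw [this]
    exact Complex.norm_exp_ofReal_mul_I _
  have hexp2 : ∀ u : ℝ, ‖Complex.exp (-(Complex.I * (p : ℂ) * (u : ℂ) / (hbar : ℂ)))‖ = 1 := by
    intro u
    have : -(Complex.I * (p : ℂ) * (u : ℂ) / (hbar : ℂ))
        = ((-(p * u / hbar) : ℝ) : ℂ) * Complex.I := by push_cast; ring
    rw [this]
    exact Complex.norm_exp_ofReal_mul_I _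
  have hψc : Continuous (⇑ψ) := ψ.continuous
  have hcont1 : Continuous φ₁ := by
    apply Continuous.mul (Complex.continuous_conj.comp hψc)
    exact Complex.continuous_exp.comp (by continuity)
  have hcont2 : Continuous φ₂ := by
    apply Continuous.mul hψc
    exact Complex.continuous_exp.comp (by continuity)
  have hint1 : Integrable φ₁ := by
    refine (ψ.integrable.norm).mono' hcont1.aestronglyMeasurable ?_
    filter_upwards with u
    rw [hφ₁def]
    simp only [norm_mul, hexp1 u, RCLike.norm_conj, mul_one]
    exact le_rfl
  have hint2 : Integrable φ₂ := by
    refine (ψ.integrable.norm).mono' hcont2.aestronglyMeasurable ?_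
    filter_upwards with u
    rw [hφ₂def]
    simp only [norm_mul, hexp2 u, mul_one]
    exact le_rfl
  -- the product function and its integrability
  set H : ℝ × ℝ → ℂ := fun z => φ₁ z.1 * φ₂ z.2 with hHdef
  have hHint : Integrable H (volume.prod volume) := hint1.mul_prod hint2
  have hHcont : Continuous H := by
    exact (hcont1.comp continuous_fst).mul (hcont2.comp continuous_snd)
  -- the change of variables map
  set Φ : ℝ × ℝ → ℝ × ℝ := fun z => (z.1 + z.2 / 2, z.1 - z.2 / 2) with hΦdef
  have hΦcont : Continuous Φ :=
    (continuous_fst.add (continuous_snd.div_const 2)).prodMk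
      (continuous_fst.sub (continuous_snd.div_const 2))
  have hΦmp : MeasurePreserving Φ (volume.prod volume) (volume.prod volume) := by
    have hT1' : MeasurePreserving (fun z : ℝ × ℝ => (z.1, z.2 + z.1 / 2))
        (volume.prod volume) (volume.prod volume) := by
      refine (MeasurePreserving.id volume).skew_product (g := fun a b => b + a / 2)
        (measurable_snd.add (measurable_fst.div_const 2)) (Filter.Eventually.of_forall fun a => ?_)
      exact (measurePreserving_add_right volume (a / 2)).map_eq
    have hT1 : MeasurePreserving (fun z : ℝ × ℝ => (z.1 + z.2 / 2, z.2))
        (volume.prod volume) (volume.prod volume) := by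
      have heq : (fun z : ℝ × ℝ => (z.1 + z.2 / 2, z.2))
          = Prod.swap ∘ (fun z : ℝ × ℝ => (z.1, z.2 + z.1 / 2)) ∘ Prod.swap := rfl
      rw [heq]
      exact (Measure.measurePreserving_swap.comp hT1').comp Measure.measurePreserving_swap
    have hT2 : MeasurePreserving (fun z : ℝ × ℝ => (z.1, z.1 - z.2))
        (volume.prod volume) (volume.prod volume) := by
      refine (MeasurePreserving.id volume).skew_product (g := fun a b => a - b)
        (measurable_fst.sub measurable_snd) (Filter.Eventually.of_forall fun a => ?_)
      exact (Measure.measurePreserving_sub_left volume a).map_eq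
    have heq : Φ = (fun z : ℝ × ℝ => (z.1, z.1 - z.2)) ∘ (fun z : ℝ × ℝ => (z.1 + z.2 / 2, z.2)) := by
      funext z
      simp only [hΦdef, Function.comp_apply]
      congr 1
      ring
    rw [heq]
    exact hT2.comp hT1
  -- pointwise identity : the Wigner integrand is H ∘ Φ
  have hcomp : ∀ z : ℝ × ℝ,
      (starRingEnd ℂ) (ψ (z.1 + z.2 / 2)) * ψ (z.1 - z.2 / 2) *
        Complex.exp (Complex.I * (p : ℂ) * (z.2 : ℂ) / (hbar : ℂ)) = H (Φ z) := by
    rintro ⟨x, x'⟩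
    simp only [hHdef, hΦdef, hφ₁def, hφ₂def]
    have hBC : Complex.exp (Complex.I * (p : ℂ) * ((x + x' / 2 : ℝ) : ℂ) / (hbar : ℂ)) *
        Complex.exp (-(Complex.I * (p : ℂ) * ((x - x' / 2 : ℝ) : ℂ) / (hbar : ℂ)))
        = Complex.exp (Complex.I * (p : ℂ) * (x' : ℂ) / (hbar : ℂ)) := by
      rw [← Complex.exp_add]
      congr 1
      push_cast
      field_simp
      ring
    linear_combination (-((starRingEnd ℂ) (ψ (x + x' / 2)) * ψ (x - x' / 2))) * hBC
  -- Fubini and change of variables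
  have hFint : Integrable (fun z : ℝ × ℝ =>
      (starRingEnd ℂ) (ψ (z.1 + z.2 / 2)) * ψ (z.1 - z.2 / 2) *
        Complex.exp (Complex.I * (p : ℂ) * (z.2 : ℂ) / (hbar : ℂ))) (volume.prod volume) := by
    have h1 : AEStronglyMeasurable H (Measure.map Φ (volume.prod volume)) := by
      rw [hΦmp.map_eq]; exact hHcont.aestronglyMeasurable
    have h2 : Integrable (H ∘ Φ) (volume.prod volume) :=
      (integrable_map_measure h1 hΦcont.measurable.aemeasurable).mp (by rwa [hΦmp.map_eq])
    exact h2.congr (Filter.Eventually.of_forall fun z => (hcomp z).symm)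
  have key : (∫ z : ℝ × ℝ, (starRingEnd ℂ) (ψ (z.1 + z.2 / 2)) * ψ (z.1 - z.2 / 2) *
        Complex.exp (Complex.I * (p : ℂ) * (z.2 : ℂ) / (hbar : ℂ)) ∂(volume.prod volume))
      = (∫ u, φ₁ u) * (∫ y, φ₂ y) := by
    have h1 : AEStronglyMeasurable H (Measure.map Φ (volume.prod volume)) := by
      rw [hΦmp.map_eq]; exact hHcont.aestronglyMeasurable
    have hmap := integral_map (φ := Φ) (f := H) hΦcont.measurable.aemeasurable h1
    rw [hΦmp.map_eq] at hmap
    calc (∫ z : ℝ × ℝ, (starRingEnd ℂ) (ψ (z.1 + z.2 / 2)) * ψ (z.1 - z.2 / 2) *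
          Complex.exp (Complex.I * (p : ℂ) * (z.2 : ℂ) / (hbar : ℂ)) ∂(volume.prod volume))
        = ∫ z : ℝ × ℝ, H (Φ z) ∂(volume.prod volume) := by
          exact integral_congr_ae (Filter.Eventually.of_forall hcomp)
      _ = ∫ z : ℝ × ℝ, H z ∂(volume.prod volume) := hmap.symm
      _ = (∫ u, φ₁ u) * (∫ y, φ₂ y) := integral_prod_mul φ₁ φ₂
  -- assemble
  have step1 : (∫ x : ℝ, wigner hbar (⇑ψ) x p)
      = ((1 / (2 * Real.pi * hbar) : ℝ) : ℂ) * ((∫ u, φ₁ u) * (∫ y, φ₂ y)) := by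
    simp only [wigner]
    rw [integral_const_mul]
    congr 1
    rw [← key]
    exact integral_integral (f := fun x x' => (starRingEnd ℂ) (ψ (x + x' / 2)) * ψ (x - x' / 2) *
      Complex.exp (Complex.I * (p : ℂ) * (x' : ℂ) / (hbar : ℂ))) hFint
  have hA : (∫ u, φ₁ u) = (starRingEnd ℂ) (∫ y, φ₂ y) := by
    rw [← integral_conj]
    congr 1
    funext y
    simp only [hφ₁def, hφ₂def, map_mul, ← Complex.exp_conj]
    congr 2
    simp [map_neg, map_div₀, map_mul, Complex.conj_I, Complex.conj_ofReal]
    ring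
  rw [step1, hA]
  set A : ℂ := ∫ y, φ₂ y with hAdef
  have hmom : momRep hbar (⇑ψ) p = ((1 / Real.sqrt (2 * Real.pi * hbar) : ℝ) : ℂ) * A := by
    simp only [momRep, hAdef, hφ₂def]
  rw [hmom]
  have h2pi : (0 : ℝ) ≤ 2 * Real.pi * hbar := by positivity
  rw [norm_mul, mul_pow, Complex.norm_real, Real.norm_eq_abs, abs_of_nonneg (by positivity)]
  have hsq : (1 / Real.sqrt (2 * Real.pi * hbar)) ^ 2 = 1 / (2 * Real.pi * hbar) := by
    rw [div_pow, one_pow, Real.sq_sqrt h2pi]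
  rw [hsq]
  have : (starRingEnd ℂ) A * A = ((‖A‖ ^ 2 : ℝ) : ℂ) := by
    rw [mul_comm, Complex.mul_conj']
    exact (Complex.ofReal_pow _ _).symm
  rw [this]
  push_cast
  ring
end

section
/- For every Schwartz function ψ : ℝ → ℂ with ∫_ℝ |ψ(x)|² dx = 1, the Wigner distribution is normalized: ∫_ℝ ∫_ℝ W_ψ(x,p) dx dp = 1. -/
/-!
For fixed `p`, the substitution `(u, v) = (x + x'/2, x - x'/2)` has Jacobian of absolute value
one, and the phase `exp (i p x' / ħ)` splits as `exp (i p u / ħ) * exp (-i p v / ħ)`. Hence the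
`x`-integral of `W_ψ(·, p)` factorises into `conj (ψ̂ ξ) * ψ̂ ξ / (2πħ)` with `ξ = p / (2πħ)`.
Integrating over `p` and rescaling `p = 2πħ ξ`, Plancherel's theorem turns this into
`∫ |ψ|² = 1`.
-/

open MeasureTheory

open ComplexConjugate FourierTransform Real

theorem measurePreserving_add_half_sub_half :
    MeasurePreserving (fun z : ℝ × ℝ => (z.1 + z.2 / 2, z.1 - z.2 / 2)) := by
  let T : ℝ × ℝ →ₗ[ℝ] ℝ × ℝ :=
    (LinearMap.fst ℝ ℝ ℝ + (2⁻¹ : ℝ) • LinearMap.snd ℝ ℝ ℝ).prod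
      (LinearMap.fst ℝ ℝ ℝ - (2⁻¹ : ℝ) • LinearMap.snd ℝ ℝ ℝ)
  have hT : ⇑T = fun z : ℝ × ℝ => (z.1 + z.2 / 2, z.1 - z.2 / 2) := by
    ext z <;> simp [T, div_eq_inv_mul]
  have hdet : LinearMap.det T = -1 := by
    rw [← LinearMap.det_toMatrix (Module.Basis.finTwoProd ℝ), Matrix.det_fin_two]
    simp [LinearMap.toMatrix_apply, T]
    norm_num
  refine ⟨by fun_prop, ?_⟩
  rw [← hT, Measure.map_linearMap_addHaar_eq_smul_addHaar _ (by simp [hdet])]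
  simp [hdet]

theorem integral_integral_mul_add_half_sub_half {𝕜 : Type*} [RCLike 𝕜] {f g : ℝ → 𝕜}
    (hf : Integrable f) (hg : Integrable g) :
    ∫ x, ∫ y, f (x + y / 2) * g (x - y / 2) = (∫ u, f u) * ∫ v, g v := by
  have hT := measurePreserving_add_half_sub_half
  have hfg : Integrable (fun z : ℝ × ℝ => f z.1 * g z.2) := hf.mul_prod hg
  calc ∫ x, ∫ y, f (x + y / 2) * g (x - y / 2)
      = ∫ z : ℝ × ℝ, f (z.1 + z.2 / 2) * g (z.1 - z.2 / 2) :=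
        (integral_prod _ (hT.integrable_comp_of_integrable hfg)).symm
    _ = ∫ z : ℝ × ℝ, f z.1 * g z.2 := by
        rw [← integral_map (f := fun z : ℝ × ℝ => f z.1 * g z.2) hT.measurable.aemeasurable
          (by rw [hT.map_eq]; exact hfg.aestronglyMeasurable), hT.map_eq]
    _ = (∫ u, f u) * ∫ v, g v := integral_prod_mul f g

theorem conj_fourierChar_smul_mul_fourierChar_smul (ψ : ℝ → ℂ) (ξ x y : ℝ) :
    conj (𝐞 (-((x + y / 2) * ξ)) • ψ (x + y / 2)) * (𝐞 (-((x - y / 2) * ξ)) • ψ (x - y / 2))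
      = conj (ψ (x + y / 2)) * ψ (x - y / 2) * 𝐞 (y * ξ) := by
  have hy : y * ξ = (x + y / 2) * ξ + -((x - y / 2) * ξ) := by ring
  rw [hy, AddChar.map_add_eq_mul, AddChar.map_neg_eq_inv _ ((x + y / 2) * ξ), Circle.smul_def,
    Circle.smul_def, Circle.coe_mul, Circle.coe_inv_eq_conj, smul_eq_mul, smul_eq_mul, map_mul,
    Complex.conj_conj]
  ring

theorem integral_wigner (hbar : ℝ) {ψ : ℝ → ℂ} (hψ : Integrable ψ) (p : ℝ) :
    ∫ x, wigner hbar ψ x p = ((‖𝓕 ψ (p / (2 * π * hbar))‖ ^ 2 / (2 * π * hbar) : ℝ) : ℂ) := by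
  set ξ := p / (2 * π * hbar) with hξ
  have hexp (y : ℝ) : Complex.exp (Complex.I * p * y / hbar) = 𝐞 (y * ξ) := by
    rw [fourierChar_apply, hξ]
    congr 1
    push_cast
    field_simp
  set φ : ℝ → ℂ := fun v => 𝐞 (-(v * ξ)) • ψ v
  have hφ : Integrable φ := by simpa [mul_comm] using (fourierIntegral_convergent_iff ξ).2 hψ
  have hφc : Integrable fun v => conj (φ v) :=
    Complex.conjCLE.toContinuousLinearMap.integrable_comp hφ
  simp only [wigner, integral_const_mul, hexp, ← conj_fourierChar_smul_mul_fourierChar_smul]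
  rw [integral_integral_mul_add_half_sub_half hφc hφ, integral_conj, ← fourier_real_eq,
    Complex.conj_mul']
  push_cast
  ring

/-- For a normalized state, the Wigner distribution is normalized:
`∫∫ W_ψ(x,p) dx dp = 1`. -/
theorem wigner_normalized (hbar : ℝ) (hhbar : 0 < hbar) (ψ : SchwartzMap ℝ ℂ)
    (hnorm : ∫ x : ℝ, ‖ψ x‖ ^ 2 = 1) :
    (∫ p : ℝ, ∫ x : ℝ, wigner hbar (⇑ψ) x p) = 1 := by
  have hc : 0 < 2 * π * hbar := by positivity
  simp_rw [integral_wigner hbar ψ.integrable]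
  rw [integral_complex_ofReal, integral_div, Measure.integral_comp_div (fun w => ‖𝓕 (⇑ψ) w‖ ^ 2),
    ← SchwartzMap.fourier_coe, SchwartzMap.integral_norm_sq_fourier, hnorm, abs_of_pos hc,
    smul_eq_mul, mul_one, div_self hc.ne', Complex.ofReal_one]
end

section
/- For every Schwartz function ψ : ℝ → ℂ and all x₁, x₂ ∈ ℝ, the cross-correlation of the wavefunction is recovered from the Wigner distribution by a Fourier transform: ψ(x₁) · conj(ψ(x₂)) = ∫_ℝ W_ψ((x₁+x₂)/2, p) · exp(i (x₁−x₂) p / ħ) dp. -/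
open MeasureTheory

/-!
For fixed `x`, `p ↦ W_ψ(x, p)` is, after the rescaling `p ↦ p / (2πħ)`, the inverse Fourier
transform of the Schwartz function `t ↦ conj (ψ (x + t/2)) * ψ (x - t/2)`. The `p`-integral is a
second inverse Fourier transform, and Fourier inversion on Schwartz space gives
`𝓕⁻ (𝓕⁻ g) y = g (-y)`.
Taking `x = (x₁ + x₂)/2` and `y = x₁ - x₂` evaluates the kernel at `t = x₂ - x₁`, which is
`ψ x₁ * conj (ψ x₂)`.
-/

open FourierTransform SchwartzMap Complex

namespace SchwartzMap

variable {E F : Type*} [NormedAddCommGroup E] [NormedSpace ℝ E]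
  [NormedAddCommGroup F] [NormedSpace ℝ F]

noncomputable def compAffineCLM (a : E) (s : ℝ) (hs : s ≠ 0) : 𝓢(E, F) →L[ℝ] 𝓢(E, F) :=
  compCLMOfContinuousLinearEquiv ℝ (ContinuousLinearEquiv.smulLeft (Units.mk0 s hs))
    ∘L compSubConstCLM ℝ (-a)

@[simp]
theorem compAffineCLM_apply (a : E) (s : ℝ) (hs : s ≠ 0) (f : 𝓢(E, F)) (t : E) :
    compAffineCLM a s hs f t = f (a + s • t) := by
  simp [compAffineCLM, add_comm]

theorem fourierInv_fourierInv_apply {V G : Type*} [NormedAddCommGroup V] [InnerProductSpace ℝ V]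
    [FiniteDimensional ℝ V] [MeasurableSpace V] [BorelSpace V]
    [NormedAddCommGroup G] [NormedSpace ℂ G] [CompleteSpace G]
    (f : 𝓢(V, G)) (y : V) : 𝓕⁻ (𝓕⁻ (f : V → G)) y = f (-y) := by
  rw [Real.fourierInv_eq_fourier_neg, ← fourierInv_coe, ← fourier_coe,
    FourierTransform.fourier_fourierInv_eq]

end SchwartzMap

noncomputable def wignerKernel (ψ : 𝓢(ℝ, ℂ)) (x : ℝ) : 𝓢(ℝ, ℂ) :=
  pairing ((ContinuousLinearMap.mul ℝ ℂ).comp (conjCLE : ℂ →L[ℝ] ℂ))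
    (compAffineCLM x (1 / 2) (by norm_num) ψ) (compAffineCLM x (-1 / 2) (by norm_num) ψ)

theorem wignerKernel_apply (ψ : 𝓢(ℝ, ℂ)) (x t : ℝ) :
    wignerKernel ψ x t = starRingEnd ℂ (ψ (x + t / 2)) * ψ (x - t / 2) := by
  simp [wignerKernel, div_eq_inv_mul, sub_eq_add_neg]

theorem wigner_eq_fourierInv (hbar : ℝ) (ψ : 𝓢(ℝ, ℂ)) (x p : ℝ) :
    wigner hbar ψ x p = ((1 / (2 * Real.pi * hbar) : ℝ) : ℂ) *
      𝓕⁻ (wignerKernel ψ x : ℝ → ℂ) (p / (2 * Real.pi * hbar)) := by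
  rw [wigner, Real.fourierInv_eq']
  congr 1
  refine integral_congr_ae (Filter.Eventually.of_forall fun t => ?_)
  simp only [wignerKernel_apply, smul_eq_mul, Real.inner_apply]
  push_cast
  field_simp

theorem integral_rescale_mul_exp_eq_fourierInv {hbar : ℝ} (hhbar : 0 < hbar) (f : ℝ → ℂ)
    (y : ℝ) :
    ∫ p : ℝ, ((1 / (2 * Real.pi * hbar) : ℝ) : ℂ) * f (p / (2 * Real.pi * hbar)) *
      exp (I * y * p / hbar) = 𝓕⁻ f y := by
  set c := 2 * Real.pi * hbar with hc_def
  have hc : 0 < c := by positivity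
  have hintegrand : ∀ p : ℝ, ((1 / c : ℝ) : ℂ) * f (p / c) * exp (I * y * p / hbar) =
      ((c⁻¹ : ℝ) : ℂ) * (exp (↑(2 * Real.pi * inner ℝ (c⁻¹ * p) y) * I) • f (c⁻¹ * p)) := by
    intro p
    rw [Real.inner_apply, smul_eq_mul, hc_def]
    push_cast
    field_simp
  simp_rw [hintegrand]
  rw [integral_const_mul, Measure.integral_comp_inv_mul_left
    (fun k => exp (↑(2 * Real.pi * inner ℝ k y) * I) • f k), abs_of_pos hc,
    ← Real.fourierInv_eq', real_smul, ← mul_assoc, ← ofReal_mul, inv_mul_cancel₀ hc.ne',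
    ofReal_one, one_mul]

/-- The cross-correlation of the wavefunction is recovered from the Wigner
distribution via a Fourier transform:
`ψ(x₁) conj(ψ(x₂)) = ∫ W_ψ((x₁+x₂)/2, p) exp(i (x₁-x₂) p/hbar) dp`. -/
theorem wigner_cross_correlation (hbar : ℝ) (hhbar : 0 < hbar) (ψ : SchwartzMap ℝ ℂ)
    (x₁ x₂ : ℝ) :
    ψ x₁ * (starRingEnd ℂ) (ψ x₂) =
      ∫ p : ℝ, wigner hbar (⇑ψ) ((x₁ + x₂) / 2) p *
        Complex.exp (Complex.I * ((x₁ : ℂ) - (x₂ : ℂ)) * (p : ℂ) / (hbar : ℂ)) := by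
  set x := (x₁ + x₂) / 2
  calc ψ x₁ * (starRingEnd ℂ) (ψ x₂) = wignerKernel ψ x (-(x₁ - x₂)) := by
        rw [wignerKernel_apply, mul_comm]
        congr 3 <;> ring
    _ = 𝓕⁻ (𝓕⁻ (wignerKernel ψ x : ℝ → ℂ)) (x₁ - x₂) :=
        (fourierInv_fourierInv_apply _ _).symm
    _ = _ := by
        rw [← integral_rescale_mul_exp_eq_fourierInv hhbar]
        simp only [wigner_eq_fourierInv, ofReal_sub]
end

section
/- (Gaussian states have nonnegative Wigner distribution) Let a, b, c ∈ ℂ with Re(a) > 0 and define ψ(x) = exp(−(a x² + b x + c)). Then the Wigner distribution W_ψ is everywhere nonnegative: W_ψ(x,p) ≥ 0 for all (x,p) ∈ ℝ². Moreover W_ψ is a joint Gaussian function of (x,p). -/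
/-!
The integrand `conj ψ(x + x'/2) ψ(x - x'/2) exp(i p x'/ħ)` is a Gaussian in `x'` whose
quadratic coefficient `-Re a / 2` is real (the `Im a` parts of the two factors cancel) and
whose linear coefficient is purely imaginary. The Wigner function is
therefore the Fourier transform of a real Gaussian, i.e. a positive real Gaussian, with exponent
`-2 (Re a x² + Re b x + Re c) - (2 Im a x + p/ħ + Im b)² / (2 Re a)`; the quadratic part is
`2 Re a x²` plus the square of a linear form in which `p` occurs, hence positive definite.
-/

open MeasureTheory

open Complex Real ComplexConjugate

lemma integral_cexp_neg_mul_sq_add_I_mul {α : ℝ} (hα : 0 < α) (β γ : ℝ) :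
    ∫ u : ℝ, cexp (-α * u ^ 2 + I * β * u + γ) = ↑(√(π / α) * rexp (γ - β ^ 2 / (4 * α))) := by
  have hα' : (α : ℂ) ≠ 0 := ofReal_ne_zero.mpr hα.ne'
  rw [integral_cexp_quadratic (by simpa using hα), sqrt_eq_rpow, ofReal_mul,
    ofReal_cpow (by positivity), ofReal_exp]
  congr 1
  · push_cast; ring_nf
  · congr 1
    push_cast
    rw [mul_pow, I_sq]
    field_simp

lemma wigner_integrand_gaussian (hbar : ℝ) (a b c : ℂ) (x p u : ℝ) :
    conj (cexp (-(a * ((x + u / 2 : ℝ) : ℂ) ^ 2 + b * ((x + u / 2 : ℝ) : ℂ) + c))) *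
        cexp (-(a * ((x - u / 2 : ℝ) : ℂ) ^ 2 + b * ((x - u / 2 : ℝ) : ℂ) + c)) *
        cexp (I * p * u / hbar) =
      cexp (-(a.re / 2 : ℝ) * u ^ 2 + I * (2 * a.im * x + hbar⁻¹ * p + b.im : ℝ) * u
        + (-2 * (a.re * x ^ 2 + b.re * x + c.re) : ℝ)) := by
  rw [← exp_conj, ← Complex.exp_add, ← Complex.exp_add]
  congr 1
  conv_lhs => rw [← re_add_im a, ← re_add_im b, ← re_add_im c]
  simp only [map_add, map_mul, map_neg, map_pow, conj_ofReal, conj_I]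
  push_cast
  ring_nf

lemma wigner_gaussian (hbar : ℝ) {a : ℂ} (ha : 0 < a.re) (b c : ℂ) (x p : ℝ) :
    wigner hbar (fun x : ℝ => cexp (-(a * (x : ℂ) ^ 2 + b * (x : ℂ) + c))) x p =
      ↑((2 * π * hbar)⁻¹ * √(2 * π / a.re) *
        rexp (-(2 * a.re * x ^ 2 + 2 * b.re * x + 2 * c.re)
          - (2 * a.re)⁻¹ * (2 * a.im * x + hbar⁻¹ * p + b.im) ^ 2)) := by
  simp only [wigner, wigner_integrand_gaussian,
    integral_cexp_neg_mul_sq_add_I_mul (half_pos ha)]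
  rw [show π / (a.re / 2) = 2 * π / a.re by ring, ← ofReal_mul]
  congr 1
  ring_nf

lemma exists_joint_gaussian {K u v : ℝ} (hK : 0 < K) (hu : 0 < u) (hv : 0 < v) (f g w e : ℝ)
    {z : ℝ} (hz : z ≠ 0) :
    ∃ C A B D E F : ℝ, 0 < C ∧ 0 < A ∧ 0 < D ∧ B ^ 2 < 4 * A * D ∧
      ∀ x p : ℝ, K * rexp (-(u * x ^ 2 + f * x + g) - v * (w * x + z * p + e) ^ 2) =
        C * rexp (-(A * x ^ 2 + B * x * p + D * p ^ 2 + E * x + F * p)) := by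
  refine ⟨K * rexp (-(g + v * e ^ 2)), u + v * w ^ 2, 2 * v * w * z, v * z ^ 2,
    f + 2 * v * w * e, 2 * v * z * e, by positivity, by positivity, by positivity, ?_, ?_⟩
  · have : 0 < u * v * z ^ 2 := by positivity
    -- `4 A D - B ^ 2 = 4 u v z ^ 2`
    linear_combination 4 * this
  · intro x p
    rw [mul_assoc, ← Real.exp_add]
    ring_nf

/-- A Gaussian state `ψ(x) = exp(-(a x² + b x + c))` with `Re a > 0` has an
everywhere nonnegative (real) Wigner distribution, which is moreover a joint
Gaussian function of `(x, p)`. -/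
theorem wigner_gaussian_nonneg (hbar : ℝ) (hhbar : 0 < hbar) (a b c : ℂ)
    (ha : 0 < a.re) (ψ : ℝ → ℂ)
    (hψ : ψ = fun x : ℝ => Complex.exp (-(a * (x : ℂ) ^ 2 + b * (x : ℂ) + c))) :
    (∀ x p : ℝ, 0 ≤ (wigner hbar ψ x p).re ∧ (wigner hbar ψ x p).im = 0) ∧
    (∃ C A B D E F : ℝ, 0 < C ∧ 0 < A ∧ 0 < D ∧ B ^ 2 < 4 * A * D ∧
      ∀ x p : ℝ, (wigner hbar ψ x p).re =
        C * Real.exp (-(A * x ^ 2 + B * x * p + D * p ^ 2 + E * x + F * p))) := by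
  subst hψ
  simp only [wigner_gaussian hbar ha, ofReal_re, ofReal_im, and_true]
  exact ⟨fun x p => by positivity,
    exists_joint_gaussian (by positivity) (by positivity) (by positivity) _ _ _ _
      (inv_ne_zero hhbar.ne')⟩
end
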